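/- arXiv:1009.3883 — 5 statements merged into one kernel-verified Lean document; each statement's English description precedes it below -/
import Mathlib

section
/- Let k ∈ ℝ and let f be the constant function f ≡ k on the grid {a, a+1, a+2, …}. Then for all α > 0, β > 0, γ ∈ [0,1], and every n ∈ ℕ with t = a + n, (_γ◇_a^{−α,−β} f)(t) = γ·Γ(n+1+α)·k/(Γ(α+1)·Γ(n+1)) + (1−γ)·Γ(n+1+β)·k/(Γ(β+1)·Γ(n+1)) (note t − a + 1 = n + 1). -/
/-!
At `t = a + n` both the delta and the nabla kernel evaluated at the node `a + j` equal
`Γ(n - j + ν) / Γ(n - j + 1)`, so the two fractional sums of equal order coincide. For a constant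
function the sum is then `Σ_{m ≤ n} Γ(m + ν) / Γ(m + 1) = Γ(n + 1 + ν) / (ν Γ(n + 1))`, which
telescopes via `Γ(s + 1) = s Γ(s)`.
-/

open Finset

/-- Falling factorial function `t^(ν) = Γ(t+1)/Γ(t+1-ν)` (with the convention
`1/Γ(z) = 0` for `z` a nonpositive integer, automatic since `Real.Gamma`
vanishes there and division by zero is zero). -/
noncomputable def fall (t ν : ℝ) : ℝ := Real.Gamma (t + 1) / Real.Gamma (t + 1 - ν)

/-- Rising factorial function `t^↑ν = Γ(t+ν)/Γ(t)`. -/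
noncomputable def rise (t ν : ℝ) : ℝ := Real.Gamma (t + ν) / Real.Gamma t

/-- Delta fractional sum `(Δ_a^{-ν} f)(t+ν)` at `t = a + n`. -/
noncomputable def deltaSum (a ν : ℝ) (f : ℝ → ℝ) (n : ℕ) : ℝ :=
  (1 / Real.Gamma ν) * ∑ j ∈ Finset.range (n + 1),
    fall ((a + n) + ν - (a + j) - 1) (ν - 1) * f (a + j)

/-- Nabla fractional sum `(∇_a^{-ν} f)(t)` at `t = a + n`. -/
noncomputable def nablaSum (a ν : ℝ) (f : ℝ → ℝ) (n : ℕ) : ℝ :=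
  (1 / Real.Gamma ν) * ∑ j ∈ Finset.range (n + 1),
    rise ((a + n) - (a + j) + 1) (ν - 1) * f (a + j)

/-- Diamond-γ fractional sum of order (α, β) at `t = a + n`. -/
noncomputable def diamond (γ a α β : ℝ) (f : ℝ → ℝ) (n : ℕ) : ℝ :=
  γ * deltaSum a α f n + (1 - γ) * nablaSum a β f n

/-- Backward difference `(∇ g)(t) = g(t) - g(t-1)`; `bdiff^[k]` is `∇^k`. -/
noncomputable def bdiff (g : ℝ → ℝ) : ℝ → ℝ := fun t => g t - g (t - 1)

/-- Generalized binomial coefficient `binom(u,v) = Γ(u+1)/(Γ(v+1)Γ(u-v+1))`. -/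
noncomputable def binomR (u v : ℝ) : ℝ :=
  Real.Gamma (u + 1) / (Real.Gamma (v + 1) * Real.Gamma (u - v + 1))

open Real in
theorem sum_range_Gamma_add_div_Gamma_add_one {ν : ℝ} (hν : 0 < ν) (n : ℕ) :
    ∑ m ∈ range (n + 1), Gamma ((m : ℝ) + ν) / Gamma ((m : ℝ) + 1)
      = Gamma ((n : ℝ) + 1 + ν) / (ν * Gamma ((n : ℝ) + 1)) := by
  induction n with
  | zero =>
    rw [sum_range_one, Nat.cast_zero, zero_add, zero_add, Gamma_one, add_comm,
      Gamma_add_one hν.ne']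
    field_simp
  | succ n ih =>
    have hΓ : Gamma ((n : ℝ) + 1) ≠ 0 := (Gamma_pos_of_pos (by positivity)).ne'
    rw [sum_range_succ, ih, Nat.cast_succ, show (n : ℝ) + 1 + 1 + ν = (n + 1 + ν) + 1 by ring,
      Gamma_add_one (by positivity : (n : ℝ) + 1 + ν ≠ 0),
      Gamma_add_one (by positivity : (n : ℝ) + 1 ≠ 0)]
    field_simp

theorem fall_add_sub_one_eq_rise_add_one (t ν : ℝ) :
    fall (t + ν - 1) (ν - 1) = rise (t + 1) (ν - 1) := by
  rw [fall, rise]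
  ring_nf

theorem deltaSum_eq_nablaSum (a ν : ℝ) (f : ℝ → ℝ) (n : ℕ) :
    deltaSum a ν f n = nablaSum a ν f n := by
  rw [deltaSum, nablaSum]
  refine congrArg _ (sum_congr rfl fun j _ => ?_)
  rw [show a + n + ν - (a + j) - 1 = (a + n - (a + j)) + ν - 1 by ring,
    fall_add_sub_one_eq_rise_add_one]

open Real in
theorem nablaSum_const (a ν k : ℝ) (hν : 0 < ν) (n : ℕ) :
    nablaSum a ν (fun _ => k) n
      = Gamma ((n : ℝ) + 1 + ν) * k / (Gamma (ν + 1) * Gamma ((n : ℝ) + 1)) := by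
  have hkernel : ∀ j ∈ range (n + 1), rise (a + n - (a + j) + 1) (ν - 1)
      = Gamma (((n - j : ℕ) : ℝ) + ν) / Gamma (((n - j : ℕ) : ℝ) + 1) := by
    intro j hj
    rw [Nat.cast_sub (mem_range_succ_iff.mp hj), rise]
    ring_nf
  have hsum : ∑ j ∈ range (n + 1), Gamma (((n - j : ℕ) : ℝ) + ν) / Gamma (((n - j : ℕ) : ℝ) + 1)
      = Gamma ((n : ℝ) + 1 + ν) / (ν * Gamma ((n : ℝ) + 1)) := by
    rw [← sum_range_Gamma_add_div_Gamma_add_one hν]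
    exact sum_range_reflect (fun m : ℕ => Gamma ((m : ℝ) + ν) / Gamma ((m : ℝ) + 1)) (n + 1)
  have hΓν : Gamma ν ≠ 0 := (Gamma_pos_of_pos hν).ne'
  have hΓn : Gamma ((n : ℝ) + 1) ≠ 0 := (Gamma_pos_of_pos (by positivity)).ne'
  rw [nablaSum, ← sum_mul, sum_congr rfl hkernel, hsum, Gamma_add_one hν.ne']
  field_simp

theorem diamond_const_general (a α β γ k : ℝ) (hα : 0 < α) (hβ : 0 < β)
    (n : ℕ) :
    diamond γ a α β (fun _ => k) n
      = γ * (Real.Gamma ((n : ℝ) + 1 + α) * k / (Real.Gamma (α + 1) * Real.Gamma ((n : ℝ) + 1)))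
        + (1 - γ) * (Real.Gamma ((n : ℝ) + 1 + β) * k
            / (Real.Gamma (β + 1) * Real.Gamma ((n : ℝ) + 1))) := by
  rw [diamond, deltaSum_eq_nablaSum, nablaSum_const a α k hα, nablaSum_const a β k hβ]

/-- diamond-γ fractional sum of a constant function. -/
theorem diamond_const (a α β γ k : ℝ) (hα : 0 < α) (hβ : 0 < β)
    (hγ : γ ∈ Set.Icc (0 : ℝ) 1) (n : ℕ) :
    diamond γ a α β (fun _ => k) n
      = γ * (Real.Gamma ((n : ℝ) + 1 + α) * k / (Real.Gamma (α + 1) * Real.Gamma ((n : ℝ) + 1)))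
        + (1 - γ) * (Real.Gamma ((n : ℝ) + 1 + β) * k
            / (Real.Gamma (β + 1) * Real.Gamma ((n : ℝ) + 1))) :=
  diamond_const_general a α β γ k hα hβ n
end

section
/- Let f be a real function on the grid {a, a+1, a+2, …}, let α₁, α₂, β₁, β₂ > 0 and γ ∈ [0,1]. Let F be the grid function F(a+m) := (_γ◇_a^{−α₂,−β₂} f)(a+m) for m ∈ ℕ. Then for every n ∈ ℕ with t = a + n, (_γ◇_a^{−α₁,−β₁} F)(t) = γ·(_γ◇_a^{−(α₁+α₂),−(β₁+α₂)} f)(t) + (1−γ)·(_γ◇_a^{−(α₁+β₂),−(β₁+β₂)} f)(t). -/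
open Finset

/-!
Both kernels are the same: for `k = n - j` they equal `Γ(ν+k) / (Γ(ν) k!) = multichoose ν k`, the
`k`-th coefficient of `(1 - X)^(-ν)`. So each fractional sum of order `ν` is multiplication of the
generating series `∑ f(a+j) X^j` by `(1 - X)^(-ν)`, the diamond sum is multiplication by
`γ (1 - X)^(-α) + (1 - γ) (1 - X)^(-β)`, and the composition rule is the identity
`(1 - X)^(-μ) (1 - X)^(-ν) = (1 - X)^(-(μ+ν))`, i.e. the Chu–Vandermonde convolution of
`multichoose`, expanded by distributivity.
-/

open PowerSeries

/-- Via `multichoose r k = (-1)^k choose (-r) k`, this is Chu–Vandermonde `Ring.add_choose_eq`. -/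
theorem Ring.multichoose_add {R : Type*} [Ring R] [BinomialRing R] {r s : R} (k : ℕ)
    (h : Commute r s) :
    multichoose (r + s) k = ∑ ij ∈ antidiagonal k, multichoose r ij.1 * multichoose s ij.2 := by
  have hneg : ∀ (x : R) (n : ℕ), choose (-x) n = (-1 : ℤ) ^ n • multichoose x n := by
    intro x n
    rw [choose_neg', Units.smul_def, Int.coe_negOnePow_natCast]
  have hsign : ((-1 : ℤ) ^ k) * (-1) ^ k = 1 := by rw [← mul_pow]; simp
  have hvand := add_choose_eq k h.neg_left.neg_right
  rw [← neg_add, hneg] at hvand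
  calc multichoose (r + s) k = (-1 : ℤ) ^ k • ((-1 : ℤ) ^ k • multichoose (r + s) k) := by
        rw [smul_smul, hsign, one_smul]
    _ = _ := by
      rw [hvand, smul_sum]
      refine sum_congr rfl fun ij hij => ?_
      rw [hneg, hneg, smul_mul_smul, smul_smul, ← pow_add, mem_antidiagonal.mp hij, hsign,
        one_smul]

theorem Real.Gamma_add_nat_eq_ascPochhammer_mul {ν : ℝ} (hν : 0 < ν) (k : ℕ) :
    Real.Gamma (ν + k) = (ascPochhammer ℝ k).eval ν * Real.Gamma ν := by
  induction k with
  | zero => simp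
  | succ k ih =>
    rw [Nat.cast_succ, ← add_assoc, Real.Gamma_add_one (by positivity), ih,
      ascPochhammer_succ_right]
    simp only [Polynomial.eval_mul, Polynomial.eval_add, Polynomial.eval_X,
      Polynomial.eval_natCast]
    ring

theorem Real.multichoose_eq_Gamma_div {ν : ℝ} (hν : 0 < ν) (k : ℕ) :
    Ring.multichoose ν k = Real.Gamma (ν + k) / (Real.Gamma ν * Real.Gamma (k + 1)) := by
  have hfact := Ring.factorial_nsmul_multichoose_eq_ascPochhammer ν k
  rw [Polynomial.ascPochhammer_smeval_eq_eval, nsmul_eq_mul] at hfact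
  rw [Real.Gamma_add_nat_eq_ascPochhammer_mul hν, Real.Gamma_nat_eq_factorial, ← hfact]
  have := (Real.Gamma_pos_of_pos hν).ne'
  field_simp

theorem one_div_Gamma_mul_fall {ν : ℝ} (hν : 0 < ν) (k : ℕ) :
    1 / Real.Gamma ν * fall (k + ν - 1) (ν - 1) = Ring.multichoose ν k := by
  rw [Real.multichoose_eq_Gamma_div hν, fall]
  ring_nf

theorem one_div_Gamma_mul_rise {ν : ℝ} (hν : 0 < ν) (k : ℕ) :
    1 / Real.Gamma ν * rise (k + 1) (ν - 1) = Ring.multichoose ν k := by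
  rw [Real.multichoose_eq_Gamma_div hν, rise]
  ring_nf

noncomputable def kernelSeries (ν : ℝ) : PowerSeries ℝ := mk (Ring.multichoose ν)

theorem kernelSeries_add (μ ν : ℝ) : kernelSeries (μ + ν) = kernelSeries μ * kernelSeries ν := by
  ext k
  simp only [coeff_mul, kernelSeries, coeff_mk, Ring.multichoose_add k (Commute.all μ ν)]

noncomputable def gridSeries (a : ℝ) (f : ℝ → ℝ) : PowerSeries ℝ := mk fun j => f (a + j)

theorem coeff_mul_gridSeries (a : ℝ) (f : ℝ → ℝ) (φ : PowerSeries ℝ) (n : ℕ) :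
    coeff n (φ * gridSeries a f) = ∑ j ∈ range (n + 1), coeff (n - j) φ * f (a + j) := by
  rw [mul_comm, coeff_mul, Nat.sum_antidiagonal_eq_sum_range_succ
    (fun i j => coeff i (gridSeries a f) * coeff j φ)]
  simp only [gridSeries, coeff_mk, mul_comm]

theorem cast_sub_of_mem_range {n j : ℕ} (hj : j ∈ range (n + 1)) :
    ((n - j : ℕ) : ℝ) = n - j :=
  Nat.cast_sub (Nat.lt_succ_iff.mp (mem_range.mp hj))

theorem deltaSum_eq_coeff {ν : ℝ} (hν : 0 < ν) (a : ℝ) (f : ℝ → ℝ) (n : ℕ) :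
    deltaSum a ν f n = coeff n (kernelSeries ν * gridSeries a f) := by
  rw [coeff_mul_gridSeries, deltaSum, mul_sum]
  refine sum_congr rfl fun j hj => ?_
  rw [kernelSeries, coeff_mk, ← one_div_Gamma_mul_fall hν, cast_sub_of_mem_range hj]
  ring_nf

theorem nablaSum_eq_coeff {ν : ℝ} (hν : 0 < ν) (a : ℝ) (f : ℝ → ℝ) (n : ℕ) :
    nablaSum a ν f n = coeff n (kernelSeries ν * gridSeries a f) := by
  rw [coeff_mul_gridSeries, nablaSum, mul_sum]
  refine sum_congr rfl fun j hj => ?_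
  rw [kernelSeries, coeff_mk, ← one_div_Gamma_mul_rise hν, cast_sub_of_mem_range hj]
  ring_nf

noncomputable def diamondSeries (γ α β : ℝ) : PowerSeries ℝ :=
  C γ * kernelSeries α + C (1 - γ) * kernelSeries β

theorem diamond_eq_coeff {α β : ℝ} (hα : 0 < α) (hβ : 0 < β) (γ a : ℝ) (f : ℝ → ℝ) (n : ℕ) :
    diamond γ a α β f n = coeff n (diamondSeries γ α β * gridSeries a f) := by
  rw [diamond, deltaSum_eq_coeff hα, nablaSum_eq_coeff hβ, diamondSeries, add_mul, map_add,
    mul_assoc, mul_assoc, coeff_C_mul, coeff_C_mul]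

theorem diamondSeries_mul (γ α₁ β₁ α₂ β₂ : ℝ) :
    diamondSeries γ α₁ β₁ * diamondSeries γ α₂ β₂ =
      C γ * diamondSeries γ (α₁ + α₂) (β₁ + α₂)
        + C (1 - γ) * diamondSeries γ (α₁ + β₂) (β₁ + β₂) := by
  simp only [diamondSeries, kernelSeries_add, map_sub, map_one]
  ring

theorem diamond_comp_general (a α₁ α₂ β₁ β₂ γ : ℝ)
    (hα₁ : 0 < α₁) (hα₂ : 0 < α₂) (hβ₁ : 0 < β₁) (hβ₂ : 0 < β₂)
    (f F : ℝ → ℝ)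
    (hF : ∀ m : ℕ, F (a + m) = diamond γ a α₂ β₂ f m) (n : ℕ) :
    diamond γ a α₁ β₁ F n
      = γ * diamond γ a (α₁ + α₂) (β₁ + α₂) f n
        + (1 - γ) * diamond γ a (α₁ + β₂) (β₁ + β₂) f n := by
  have hgrid : gridSeries a F = diamondSeries γ α₂ β₂ * gridSeries a f := by
    ext m
    rw [gridSeries, coeff_mk, hF, diamond_eq_coeff hα₂ hβ₂]
  rw [diamond_eq_coeff hα₁ hβ₁, hgrid, ← mul_assoc, diamondSeries_mul, add_mul, map_add,
    mul_assoc, mul_assoc, coeff_C_mul, coeff_C_mul,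
    diamond_eq_coeff (add_pos hα₁ hα₂) (add_pos hβ₁ hα₂),
    diamond_eq_coeff (add_pos hα₁ hβ₂) (add_pos hβ₁ hβ₂)]

/-- composition rule for the diamond-γ fractional sum. -/
theorem diamond_comp (a α₁ α₂ β₁ β₂ γ : ℝ)
    (hα₁ : 0 < α₁) (hα₂ : 0 < α₂) (hβ₁ : 0 < β₁) (hβ₂ : 0 < β₂)
    (hγ : γ ∈ Set.Icc (0 : ℝ) 1) (f F : ℝ → ℝ)
    (hF : ∀ m : ℕ, F (a + m) = diamond γ a α₂ β₂ f m) (n : ℕ) :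
    diamond γ a α₁ β₁ F n
      = γ * diamond γ a (α₁ + α₂) (β₁ + α₂) f n
        + (1 - γ) * diamond γ a (α₁ + β₂) (β₁ + β₂) f n :=
  diamond_comp_general a α₁ α₂ β₁ β₂ γ hα₁ hα₂ hβ₁ hβ₂ f F hF n
end

section
/- Semigroup property of the delta fractional sum: let f be a real function on the grid {a, a+1, a+2, …} and α₁, α₂ > 0. Let F be the grid function F(a+m) := (Δ_a^{−α₂} f)(a+m+α₂) for m ∈ ℕ. Then for every n ∈ ℕ with t = a + n, (Δ_a^{−α₁} F)(t+α₁) = (Δ_a^{−(α₁+α₂)} f)(t+α₁+α₂). -/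
open Finset

/-!
Since `fall (k + ν - 1) (ν - 1) / Γ(ν) = Γ(k + ν) / (Γ(ν) k!)` is the `k`-th coefficient of
`(1 - X)^(-ν) = ∑ₖ multichoose ν k Xᵏ`, the delta fractional sum of order `ν` multiplies the
generating function `∑ⱼ f(a + j) Xʲ` by `(1 - X)^(-ν)`. The semigroup property is then the
exponent law `(1 - X)^(-α₁) (1 - X)^(-α₂) = (1 - X)^(-(α₁ + α₂))` together with associativity
of multiplication of power series; the exponent law is the Chu–Vandermonde identity behind
`PowerSeries.binomialSeries_add`.
-/

namespace PowerSeries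

variable {R : Type*} [CommRing R] [BinomialRing R]

variable (R) in
/-- The power series `(1 - X)^(-r)`. -/
def multichooseSeries (r : R) : PowerSeries R :=
  mk (Ring.multichoose r)

theorem multichooseSeries_eq_rescale_binomialSeries (r : R) :
    multichooseSeries R r = rescale (-1) (binomialSeries R (-r)) := by
  ext n
  rw [multichooseSeries, coeff_mk, coeff_rescale, binomialSeries_coeff, Ring.choose_neg',
    Units.smul_def, Int.coe_negOnePow_natCast, smul_eq_mul, mul_one, zsmul_eq_mul]
  push_cast
  rw [← mul_assoc, ← mul_pow, neg_one_mul, neg_neg, one_pow, one_mul]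

theorem multichooseSeries_add (r s : R) :
    multichooseSeries R (r + s) = multichooseSeries R r * multichooseSeries R s := by
  simp only [multichooseSeries_eq_rescale_binomialSeries, neg_add, binomialSeries_add, map_mul]

end PowerSeries

open PowerSeries

theorem multichoose_eq_ascPochhammer_eval_div_factorial {K : Type*} [Field K] [CharZero K]
    (r : K) (k : ℕ) : Ring.multichoose r k = (ascPochhammer K k).eval r / k.factorial := by
  rw [eq_div_iff (Nat.cast_ne_zero.mpr k.factorial_ne_zero), mul_comm, ← nsmul_eq_mul,
    Ring.factorial_nsmul_multichoose_eq_ascPochhammer, Polynomial.ascPochhammer_smeval_eq_eval]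

theorem Real.Gamma_nat_add_eq_ascPochhammer_mul {x : ℝ} (hx : 0 < x) (k : ℕ) :
    Real.Gamma (k + x) = (ascPochhammer ℝ k).eval x * Real.Gamma x := by
  induction k with
  | zero => simp
  | succ k ih =>
    rw [Nat.cast_succ, add_right_comm, Real.Gamma_add_one (by positivity), ih,
      ascPochhammer_succ_eval, add_comm (k : ℝ)]
    ring

theorem fall_nat_add_sub_one (ν : ℝ) (k : ℕ) :
    fall (k + ν - 1) (ν - 1) = Real.Gamma (k + ν) / k.factorial := by
  rw [fall, sub_add_cancel, show (k : ℝ) + ν - (ν - 1) = k + 1 by ring,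
    Real.Gamma_nat_eq_factorial]

theorem deltaSum_eq_coeff_multichooseSeries_mul {ν : ℝ} (hν : 0 < ν) (a : ℝ) (f : ℝ → ℝ)
    (n : ℕ) : deltaSum a ν f n = coeff n (multichooseSeries ℝ ν * mk fun j => f (a + j)) := by
  rw [deltaSum, mul_comm (multichooseSeries ℝ ν), coeff_mul,
    Nat.sum_antidiagonal_eq_sum_range_succ
      (fun i k => coeff i (mk fun j => f (a + j)) * coeff k (multichooseSeries ℝ ν)), mul_sum]
  refine sum_congr rfl fun j hj => ?_
  have hjn : j ≤ n := Nat.lt_succ_iff.mp (mem_range.mp hj)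
  have hkernel : (a + n) + ν - (a + j) - 1 = ((n - j : ℕ) : ℝ) + ν - 1 := by
    push_cast [hjn]; ring
  have hΓ : Real.Gamma ν ≠ 0 := (Real.Gamma_pos_of_pos hν).ne'
  rw [hkernel, fall_nat_add_sub_one, coeff_mk, multichooseSeries, coeff_mk,
    multichoose_eq_ascPochhammer_eval_div_factorial, Real.Gamma_nat_add_eq_ascPochhammer_mul hν]
  field_simp

/-- semigroup property of the delta fractional sum. -/
theorem delta_delta (a α₁ α₂ : ℝ) (hα₁ : 0 < α₁) (hα₂ : 0 < α₂) (f F : ℝ → ℝ)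
    (hF : ∀ m : ℕ, F (a + m) = deltaSum a α₂ f m) (n : ℕ) :
    deltaSum a α₁ F n = deltaSum a (α₁ + α₂) f n := by
  have hF_series : (mk fun m => F (a + m)) = multichooseSeries ℝ α₂ * mk fun j => f (a + j) := by
    ext m
    rw [coeff_mk, hF, deltaSum_eq_coeff_multichooseSeries_mul hα₂]
  rw [deltaSum_eq_coeff_multichooseSeries_mul hα₁,
    deltaSum_eq_coeff_multichooseSeries_mul (add_pos hα₁ hα₂), hF_series, ← mul_assoc,
    multichooseSeries_add]
end

section
/- Leibniz formula for the diamond fractional sum: let f, g be real functions on the grid {a, a+1, a+2, …}, let 0 < α < 1, 0 < β < 1, γ ∈ [0,1], and n ∈ ℕ with t = a + n. Then (_γ◇_a^{−α,−β}(f·g))(t) = γ Σ_{k=0}^{n} binom(−α,k)·(∇^k g)(t)·[(1/Γ(α+k)) Σ_{j=0}^{n−k} (t+α−(a+j)−1)^(α+k−1) f(a+j)] + (1−γ) Σ_{k=0}^{n} binom(−β,k)·(∇^k g)(t)·[(1/Γ(β+k)) Σ_{j=0}^{n−k} (t+β−(a+j)−1)^(β+k−1) f(a+j)], where f·g is the pointwise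 product. -/
/-!
The nabla and delta kernels coincide (both equal `Γ(n - j + ν) / (n - j)!`), so the diamond sum
is a convex combination of two delta sums and it suffices to expand `Δ_a^{-ν} (f g)`.
For non-integral `ν` one has `binom(-ν, k) / Γ(ν + k) = (-1)^k / (k! Γ(ν))`, and the delta kernel
of order `ν + k` at distance `m = n - j` is `Γ(m + ν) / (m - k)!`. Exchanging the sums over `j`
and `k`, the inner sum becomes `Γ(m + ν) / (m! Γ(ν)) · ∑ₖ (-1)^k C(m, k) ∇^k g(t)`, which is
`g(t - m) = g(a + j)` by Newton's backward difference formula.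
-/

open Finset

lemma fwdDiff_neg_one_iterate (g : ℝ → ℝ) (k : ℕ) :
    (fwdDiff (-1))^[k] g = (-1 : ℝ) ^ k • bdiff^[k] g := by
  induction k with
  | zero => simp
  | succ k ih =>
    rw [Function.iterate_succ_apply', Function.iterate_succ_apply', ih, fwdDiff_const_smul,
      pow_succ, mul_smul]
    congr 1
    ext t
    simp [fwdDiff, bdiff, sub_eq_add_neg]

lemma sub_nat_eq_sum_bdiff_iterate (g : ℝ → ℝ) (t : ℝ) (m : ℕ) :
    g (t - m) = ∑ k ∈ range (m + 1), (-1) ^ k * m.choose k * (bdiff^[k] g) t := by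
  have h := shift_eq_sum_fwdDiff_iter (-1 : ℝ) g m t
  rw [nsmul_eq_mul, mul_neg_one, ← sub_eq_add_neg] at h
  rw [h]
  refine sum_congr rfl fun k _ => ?_
  rw [fwdDiff_neg_one_iterate, nsmul_eq_mul, Pi.smul_apply, smul_eq_mul]
  ring

lemma Real.Gamma_add_nat_eq_ascPochhammer_mul_s10 {z : ℝ} (hz : ∀ m : ℕ, z ≠ -m) (n : ℕ) :
    Real.Gamma (z + n) = (ascPochhammer ℝ n).eval z * Real.Gamma z := by
  induction n with
  | zero => simp
  | succ n ih =>
    have hzn : z + n ≠ 0 := fun h => hz n (by linarith)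
    rw [Nat.cast_succ, ← add_assoc, Real.Gamma_add_one hzn, ih, ascPochhammer_succ_eval]
    ring

lemma binomR_neg_mul_one_div_Gamma {ν : ℝ} (hν : ∀ m : ℤ, ν ≠ m) (k : ℕ) :
    binomR (-ν) k * (1 / Real.Gamma (ν + k)) = (-1) ^ k / (k.factorial * Real.Gamma ν) := by
  have hν_nat : ∀ m : ℕ, ν ≠ -m := fun m h => hν (-m) (by push_cast; exact h)
  have hνk : ∀ m : ℕ, ν + k ≠ -m := fun m h => hν (-(m + k)) (by push_cast; linarith)
  have hν_refl : ∀ m : ℕ, 1 - ν - k ≠ -m := fun m h => hν (1 + m - k) (by push_cast; linarith)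
  have hΓ :
      Real.Gamma (1 - ν) = (ascPochhammer ℝ k).eval (1 - ν - k) * Real.Gamma (1 - ν - k) := by
    simpa using Real.Gamma_add_nat_eq_ascPochhammer_mul_s10 hν_refl k
  have hΓν := Real.Gamma_add_nat_eq_ascPochhammer_mul_s10 hν_nat k
  have hasc : (ascPochhammer ℝ k).eval (1 - ν - k) = (-1) ^ k * (ascPochhammer ℝ k).eval ν := by
    rw [show 1 - ν - k = -(ν + k - 1) by ring, ascPochhammer_eval_neg_eq_descPochhammer,
      descPochhammer_eval_eq_ascPochhammer, show ν + k - 1 - k + 1 = ν by ring]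
  have hne₁ := Real.Gamma_ne_zero hν_refl
  have hne₂ := Real.Gamma_ne_zero hν_nat
  have hne₃ : (ascPochhammer ℝ k).eval ν ≠ 0 := by
    have := Real.Gamma_ne_zero hνk
    rw [hΓν] at this
    exact left_ne_zero_of_mul this
  rw [binomR, Real.Gamma_nat_eq_factorial, show -ν + 1 = 1 - ν by ring,
    show -ν - k + 1 = 1 - ν - k by ring, hΓ, hΓν, hasc]
  field_simp

lemma fall_nat_add (ν : ℝ) {m k : ℕ} (hk : k ≤ m) :
    fall (m + ν - 1) (ν + k - 1) = Real.Gamma (m + ν) / (m - k).factorial := by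
  rw [fall, ← Real.Gamma_nat_eq_factorial, Nat.cast_sub hk]
  congr 2 <;> ring

lemma rise_add_one (x ν : ℝ) : rise (x + 1) (ν - 1) = fall (x + ν - 1) (ν - 1) := by
  rw [rise, fall]
  congr 1 <;> ring_nf

lemma nablaSum_eq_deltaSum (a ν : ℝ) (f : ℝ → ℝ) (n : ℕ) :
    nablaSum a ν f n = deltaSum a ν f n := by
  simp only [nablaSum, deltaSum, rise_add_one]
  congr 2 with j
  ring_nf

lemma sum_binomR_bdiff_iterate_mul_fall {ν : ℝ} (hν : ∀ m : ℤ, ν ≠ m) (g : ℝ → ℝ) (t : ℝ)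
    (m : ℕ) :
    ∑ k ∈ range (m + 1), binomR (-ν) k * (bdiff^[k] g) t *
        (1 / Real.Gamma (ν + k) * fall (m + ν - 1) (ν + k - 1))
      = 1 / Real.Gamma ν * fall (m + ν - 1) (ν - 1) * g (t - m) := by
  rw [sub_nat_eq_sum_bdiff_iterate g, mul_sum]
  refine sum_congr rfl fun k hk => ?_
  have hkm : k ≤ m := Nat.lt_succ_iff.mp (mem_range.mp hk)
  have hchoose : (m.choose k : ℝ) * k.factorial * (m - k).factorial = m.factorial := by
    exact_mod_cast Nat.choose_mul_factorial_mul_factorial hkm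
  have hchoose_ne : (m.choose k : ℝ) ≠ 0 := by exact_mod_cast (Nat.choose_pos hkm).ne'
  have hcoef := binomR_neg_mul_one_div_Gamma hν k
  have hfall₀ : fall (m + ν - 1) (ν - 1) = Real.Gamma (m + ν) / m.factorial := by
    simpa using fall_nat_add ν (Nat.zero_le m)
  rw [fall_nat_add ν hkm, hfall₀]
  calc binomR (-ν) k * (bdiff^[k] g) t * (1 / Real.Gamma (ν + k) *
          (Real.Gamma (m + ν) / (m - k).factorial))
      = (binomR (-ν) k * (1 / Real.Gamma (ν + k))) * Real.Gamma (m + ν) / (m - k).factorial *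
          (bdiff^[k] g) t := by ring
    _ = _ := by
      rw [hcoef, ← hchoose]
      field_simp

theorem deltaSum_mul_eq_sum_bdiff_iterate (a : ℝ) {ν : ℝ} (hν : ∀ m : ℤ, ν ≠ m)
    (f g : ℝ → ℝ) (n : ℕ) :
    deltaSum a ν (f * g) n
      = ∑ k ∈ range (n + 1), binomR (-ν) k * (bdiff^[k] g) (a + n) *
          ((1 / Real.Gamma (ν + k)) * ∑ j ∈ range (n - k + 1),
            fall ((a + n) + ν - (a + j) - 1) (ν + k - 1) * f (a + j)) := by
  symm
  calc _ = ∑ k ∈ range (n + 1), ∑ j ∈ range (n - k + 1),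
        binomR (-ν) k * (bdiff^[k] g) (a + n) *
          (1 / Real.Gamma (ν + k) * fall ((a + n) + ν - (a + j) - 1) (ν + k - 1)) * f (a + j) := by
        simp only [mul_sum, mul_assoc]
    _ = ∑ j ∈ range (n + 1), ∑ k ∈ range (n - j + 1),
        binomR (-ν) k * (bdiff^[k] g) (a + n) *
          (1 / Real.Gamma (ν + k) * fall ((a + n) + ν - (a + j) - 1) (ν + k - 1)) * f (a + j) :=
        sum_comm' fun k j => by simp only [mem_range]; omega
    _ = ∑ j ∈ range (n + 1),
        1 / Real.Gamma ν * fall ((a + n) + ν - (a + j) - 1) (ν - 1) * g (a + j) * f (a + j) := by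
        refine sum_congr rfl fun j hj => ?_
        have hjn : j ≤ n := Nat.lt_succ_iff.mp (mem_range.mp hj)
        have harg : (a + n) + ν - (a + j) - 1 = ((n - j : ℕ) : ℝ) + ν - 1 := by
          rw [Nat.cast_sub hjn]; ring
        have hpoint : a + n - ((n - j : ℕ) : ℝ) = a + j := by
          rw [Nat.cast_sub hjn]; ring
        rw [← sum_mul, harg, sum_binomR_bdiff_iterate_mul_fall hν, hpoint]
    _ = _ := by
        simp only [deltaSum, mul_sum, Pi.mul_apply]
        refine sum_congr rfl fun j _ => ?_
        ring

lemma ne_intCast_of_mem_Ioo {ν : ℝ} (h₀ : 0 < ν) (h₁ : ν < 1) (m : ℤ) : ν ≠ m := by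
  rintro rfl
  have : (0 : ℤ) < m := by exact_mod_cast h₀
  have : m < 1 := by exact_mod_cast h₁
  omega

theorem diamond_leibniz_general (a α β γ : ℝ) (hα₀ : 0 < α) (hα₁ : α < 1)
    (hβ₀ : 0 < β) (hβ₁ : β < 1)
    (f g : ℝ → ℝ) (n : ℕ) :
    diamond γ a α β (f * g) n
      = γ * ∑ k ∈ Finset.range (n + 1),
            binomR (-α) (k : ℝ) * (bdiff^[k] g) (a + n) *
              ((1 / Real.Gamma (α + k)) * ∑ j ∈ Finset.range (n - k + 1),
                fall ((a + n) + α - (a + j) - 1) (α + k - 1) * f (a + j))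
        + (1 - γ) * ∑ k ∈ Finset.range (n + 1),
            binomR (-β) (k : ℝ) * (bdiff^[k] g) (a + n) *
              ((1 / Real.Gamma (β + k)) * ∑ j ∈ Finset.range (n - k + 1),
                fall ((a + n) + β - (a + j) - 1) (β + k - 1) * f (a + j)) := by
  rw [diamond, nablaSum_eq_deltaSum,
    deltaSum_mul_eq_sum_bdiff_iterate a (ne_intCast_of_mem_Ioo hα₀ hα₁),
    deltaSum_mul_eq_sum_bdiff_iterate a (ne_intCast_of_mem_Ioo hβ₀ hβ₁)]

/-- Leibniz formula for the diamond-γ fractional sum. -/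
theorem diamond_leibniz (a α β γ : ℝ) (hα₀ : 0 < α) (hα₁ : α < 1)
    (hβ₀ : 0 < β) (hβ₁ : β < 1) (hγ : γ ∈ Set.Icc (0 : ℝ) 1)
    (f g : ℝ → ℝ) (n : ℕ) :
    diamond γ a α β (f * g) n
      = γ * ∑ k ∈ Finset.range (n + 1),
            binomR (-α) (k : ℝ) * (bdiff^[k] g) (a + n) *
              ((1 / Real.Gamma (α + k)) * ∑ j ∈ Finset.range (n - k + 1),
                fall ((a + n) + α - (a + j) - 1) (α + k - 1) * f (a + j))
        + (1 - γ) * ∑ k ∈ Finset.range (n + 1),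
            binomR (-β) (k : ℝ) * (bdiff^[k] g) (a + n) *
              ((1 / Real.Gamma (β + k)) * ∑ j ∈ Finset.range (n - k + 1),
                fall ((a + n) + β - (a + j) - 1) (β + k - 1) * f (a + j)) :=
  diamond_leibniz_general a α β γ hα₀ hα₁ hβ₀ hβ₁ f g n
end

section
/- Leibniz formula for the delta fractional sum: let f, g be real functions on the grid {a, a+1, a+2, …}, let 0 < α < 1, and n ∈ ℕ with t = a + n. Then (Δ_a^{−α}(f·g))(t+α) = Σ_{k=0}^{n} binom(−α,k)·(∇^k g)(t)·[(1/Γ(α+k)) Σ_{j=0}^{n−k} (t+α−(a+j)−1)^(α+k−1) f(a+j)], where f·g is the pointwise product. -/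
open Finset

/-! Writing `t = a + n`, Newton's backward formula expands `g (a + j) = g (t - (n - j))` in
the differences `∇^k g (t)` with coefficients `(-1)^k C(n-j, k)`; after swapping the two sums
it remains to match coefficients. The kernel of order `α + k` at distance `m = n - j` is
`Γ(m+α)/(m-k)!`, and Euler's reflection formula gives
`binom(-α, k) / Γ(α+k) = (-1)^k / (Γ(α) k!)` for non-integral `α`. -/

open Real Nat

lemma bdiff_iterate_eq_neg_one_pow_smul_fwdDiff_iter (g : ℝ → ℝ) (k : ℕ) :
    bdiff^[k] g = (-1 : ℝ) ^ k • (fwdDiff (-1))^[k] g := by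
  induction k generalizing g with
  | zero => simp
  | succ k ih =>
    have hstep : bdiff g = (-1 : ℝ) • fwdDiff (-1) g := by
      ext t; simp [bdiff, fwdDiff, sub_eq_add_neg]
    rw [Function.iterate_succ_apply, hstep, ih, fwdDiff_iter_const_smul,
      ← Function.iterate_succ_apply, smul_smul, pow_succ]

/-- Newton's backward interpolation formula. -/
lemma apply_sub_natCast_eq_sum_bdiff_iter (g : ℝ → ℝ) (t : ℝ) (m : ℕ) :
    g (t - m) = ∑ k ∈ range (m + 1), (-1 : ℝ) ^ k * m.choose k * (bdiff^[k] g) t := by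
  rw [sub_eq_add_neg, ← mul_neg_one, ← nsmul_eq_mul, shift_eq_sum_fwdDiff_iter (-1 : ℝ) g]
  refine sum_congr rfl fun k _ => ?_
  rw [bdiff_iterate_eq_neg_one_pow_smul_fwdDiff_iter, Pi.smul_apply, smul_eq_mul, nsmul_eq_mul,
    mul_mul_mul_comm, ← mul_pow]
  norm_num

lemma fall_eq_Gamma_div_factorial {t ν : ℝ} {p : ℕ} (h : t - ν = p) :
    fall t ν = Gamma (t + 1) / p ! := by
  rw [fall, ← Gamma_nat_eq_factorial, ← h]
  ring_nf

lemma Gamma_add_natCast_mul_Gamma_one_sub_sub_natCast (α : ℝ) (k : ℕ) :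
    Gamma (α + k) * Gamma (1 - α - k) = (-1) ^ k * (π / sin (π * α)) := by
  rw [sub_sub, Gamma_mul_Gamma_one_sub, mul_add, mul_comm π (k : ℝ), sin_add_nat_mul_pi,
    div_mul_eq_div_div, div_eq_mul_inv _ ((-1 : ℝ) ^ k), ← inv_pow, inv_neg_one, mul_comm,
    mul_div_assoc]

lemma binomR_neg_natCast_mul {α : ℝ} (hα : ∀ z : ℤ, α ≠ z) (k : ℕ) :
    binomR (-α) k * (Gamma α * k !) = (-1) ^ k * Gamma (α + k) := by
  have hsin : sin (π * α) ≠ 0 := by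
    rw [Ne, sin_eq_zero_iff]
    rintro ⟨z, hz⟩
    exact hα z (by nlinarith [pi_pos])
  have hreflect₀ := Gamma_add_natCast_mul_Gamma_one_sub_sub_natCast α 0
  have hreflect := Gamma_add_natCast_mul_Gamma_one_sub_sub_natCast α k
  have hne : Gamma (1 - α - k) ≠ 0 := by
    intro h
    rw [h, mul_zero, eq_comm] at hreflect
    simp [pi_ne_zero, hsin] at hreflect
  have hsign : (-1 : ℝ) ^ k * (-1) ^ k = 1 := by rw [← mul_pow]; norm_num
  rw [binomR, ← Gamma_nat_eq_factorial]
  simp only [Nat.cast_zero, add_zero, sub_zero, pow_zero, one_mul] at hreflect₀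
  rw [show -α + 1 = 1 - α by ring, show -α - k + 1 = 1 - α - k by ring]
  field_simp
  linear_combination hreflect₀ - (-1) ^ k * hreflect - π / sin (π * α) * hsign

lemma Gamma_add_natCast_ne_zero {α : ℝ} (hα : ∀ z : ℤ, α ≠ z) (k : ℕ) : Gamma (α + k) ≠ 0 :=
  Gamma_ne_zero fun m h => hα (-(m + k)) (by push_cast; linarith)

lemma binomR_neg_mul_fall {α : ℝ} (hα : ∀ z : ℤ, α ≠ z) {m k : ℕ} (hkm : k ≤ m) :
    binomR (-α) k * (1 / Gamma (α + k) * fall (m + α - 1) (α + k - 1))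
      = (-1) ^ k * m.choose k * (1 / Gamma α * fall (m + α - 1) (α - 1)) := by
  rw [fall_eq_Gamma_div_factorial (p := m - k) (by push_cast [Nat.cast_sub hkm]; ring),
    fall_eq_Gamma_div_factorial (p := m) (by ring), Nat.cast_choose ℝ hkm, sub_add_cancel]
  have hbinom := binomR_neg_natCast_mul hα k
  have hΓk := Gamma_add_natCast_ne_zero hα k
  have hΓ : Gamma α ≠ 0 := by simpa using Gamma_add_natCast_ne_zero hα 0
  field_simp
  linear_combination (Gamma (m + α)) * hbinom

lemma add_natCast_add_sub_add_natCast_sub_one (a ν : ℝ) {n j : ℕ} (hjn : j ≤ n) :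
    (a + n) + ν - (a + j) - 1 = ((n - j : ℕ) : ℝ) + ν - 1 := by
  push_cast [Nat.cast_sub hjn]
  ring

/-- Leibniz formula for the delta fractional sum. -/
theorem delta_leibniz (a α : ℝ) (hα₀ : 0 < α) (hα₁ : α < 1) (f g : ℝ → ℝ) (n : ℕ) :
    deltaSum a α (f * g) n
      = ∑ k ∈ Finset.range (n + 1),
          binomR (-α) (k : ℝ) * (bdiff^[k] g) (a + n) *
            ((1 / Real.Gamma (α + k)) * ∑ j ∈ Finset.range (n - k + 1),
              fall ((a + n) + α - (a + j) - 1) (α + k - 1) * f (a + j)) := by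
  have hα : ∀ z : ℤ, α ≠ z := by
    rintro z rfl
    have : 0 < z := by exact_mod_cast hα₀
    have : z < 1 := by exact_mod_cast hα₁
    omega
  calc deltaSum a α (f * g) n
      = ∑ j ∈ range (n + 1), ∑ k ∈ range (n - j + 1), binomR (-α) k * (bdiff^[k] g) (a + n) *
          (1 / Gamma (α + k) * (fall ((a + n) + α - (a + j) - 1) (α + k - 1) * f (a + j))) := by
        rw [deltaSum, mul_sum]
        refine sum_congr rfl fun j hj => ?_
        have hjn := mem_range_succ_iff.mp hj
        have hnewton := apply_sub_natCast_eq_sum_bdiff_iter g (a + n) (n - j)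
        rw [show a + n - ((n - j : ℕ) : ℝ) = a + j by push_cast [Nat.cast_sub hjn]; ring]
          at hnewton
        simp only [Pi.mul_apply, hnewton, mul_sum]
        refine sum_congr rfl fun k hk => ?_
        rw [add_natCast_add_sub_add_natCast_sub_one a α hjn]
        linear_combination (-(bdiff^[k] g (a + n) * f (a + j))) *
          binomR_neg_mul_fall hα (mem_range_succ_iff.mp hk)
    _ = _ := by
        simp_rw [mul_sum]
        exact sum_comm' fun j k => by simp only [mem_range]; omega
end
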